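/- arXiv:1505.07287 — 5 statements merged into one kernel-verified Lean document; each statement's English description precedes it below -/
import Mathlib

section
/- Let X = (0,1], φ(t) = t for t ≤ 1 and φ(t) = 1 for t > 1, and define M(x, y, t) = 1 if x = y and M(x, y, t) = (min{x,y}/max{x,y}) · φ(t) otherwise. Then (X, M, ·), with · ordinary multiplication, is a fuzzy metric space. -/
/-! The ratio `min x y / max x y` equals `exp (-|log x - log y|)`, so the triangle inequality for
`|log x - log y|` makes it multiplicatively transitive. Together with `φ t * φ s ≤ φ (t + s)` for
`φ t = min t 1` this is the fuzzy triangle inequality for the product t-norm. -/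

open Filter Topology

/-- A George–Veeramani fuzzy metric space: a continuous t-norm `star` together
with a fuzzy metric `M : X → X → (0,∞) → [0,1]`. -/
structure FuzzyMetricSpace (X : Type*) where
  star : ℝ → ℝ → ℝ
  M : X → X → ℝ → ℝ
  star_mem : ∀ a b : ℝ, a ∈ Set.Icc (0:ℝ) 1 → b ∈ Set.Icc (0:ℝ) 1 →
    star a b ∈ Set.Icc (0:ℝ) 1
  star_assoc : ∀ a b c : ℝ, star (star a b) c = star a (star b c)
  star_comm : ∀ a b : ℝ, star a b = star b a
  star_cont : ContinuousOn (fun p : ℝ × ℝ => star p.1 p.2)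
    (Set.Icc (0:ℝ) 1 ×ˢ Set.Icc (0:ℝ) 1)
  star_one : ∀ a ∈ Set.Icc (0:ℝ) 1, star a 1 = a
  star_mono : ∀ a b c d : ℝ, a ∈ Set.Icc (0:ℝ) 1 → b ∈ Set.Icc (0:ℝ) 1 →
    c ∈ Set.Icc (0:ℝ) 1 → d ∈ Set.Icc (0:ℝ) 1 → a ≤ c → b ≤ d →
    star a b ≤ star c d
  M_pos : ∀ x y t, 0 < t → 0 < M x y t
  M_le_one : ∀ x y t, 0 < t → M x y t ≤ 1
  M_eq_one_iff : ∀ x y t, 0 < t → (M x y t = 1 ↔ x = y)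
  M_symm : ∀ x y t, M x y t = M y x t
  M_triangle : ∀ x y z t s, 0 < t → 0 < s →
    star (M x y t) (M y z s) ≤ M x z (t + s)
  M_cont : ∀ x y, ContinuousOn (fun t => M x y t) (Set.Ioi (0:ℝ))

open Real

section MinDivMax

variable {x y z : ℝ}

theorem min_div_max_pos (hx : 0 < x) (hy : 0 < y) : 0 < min x y / max x y :=
  div_pos (lt_min hx hy) (lt_max_of_lt_left hx)

theorem min_div_max_lt_one (hx : 0 < x) (hxy : x ≠ y) : min x y / max x y < 1 :=
  (div_lt_one (lt_max_of_lt_left hx)).2 (min_lt_max.2 hxy)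

theorem min_div_max_comm (x y : ℝ) : min x y / max x y = min y x / max y x := by
  rw [min_comm, max_comm]

theorem min_div_max_eq_exp_neg_abs_log_sub (hx : 0 < x) (hy : 0 < y) :
    min x y / max x y = exp (-|log x - log y|) := by
  wlog hxy : x ≤ y generalizing x y
  · rw [min_div_max_comm, abs_sub_comm]
    exact this hy hx (le_of_not_ge hxy)
  rw [min_eq_left hxy, max_eq_right hxy, abs_of_nonpos (sub_nonpos.2 (log_le_log hx hxy)),
    neg_neg, exp_sub, exp_log hx, exp_log hy]

theorem min_div_max_mul_min_div_max_le (hx : 0 < x) (hy : 0 < y) (hz : 0 < z) :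
    min x y / max x y * (min y z / max y z) ≤ min x z / max x z := by
  simp only [min_div_max_eq_exp_neg_abs_log_sub, hx, hy, hz, ← exp_add, exp_le_exp]
  linarith [abs_sub_le (log x) (log y) (log z)]

end MinDivMax

theorem min_one_mul_min_one_le_min_add_one {t s : ℝ} (ht : 0 ≤ t) (hs : 0 ≤ s) :
    min t 1 * min s 1 ≤ min (t + s) 1 :=
  calc min t 1 * min s 1 ≤ min t 1 :=
        mul_le_of_le_one_right (le_min ht zero_le_one) (min_le_right _ _)
    _ ≤ min (t + s) 1 := min_le_min_right 1 (le_add_of_nonneg_right hs)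

namespace FuzzyMetricSpace

variable {X : Type*} [DecidableEq X] {m : X → X → ℝ}

noncomputable def similarityFuzzyMetric (m : X → X → ℝ) (x y : X) (t : ℝ) : ℝ :=
  if x = y then 1 else m x y * min t 1

theorem similarityFuzzyMetric_self (x : X) (t : ℝ) : similarityFuzzyMetric m x x t = 1 :=
  if_pos rfl

theorem similarityFuzzyMetric_of_ne {x y : X} (hxy : x ≠ y) (t : ℝ) :
    similarityFuzzyMetric m x y t = m x y * min t 1 :=
  if_neg hxy

theorem similarityFuzzyMetric_pos (pos : ∀ x y, 0 < m x y) (x y : X) {t : ℝ} (ht : 0 < t) :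
    0 < similarityFuzzyMetric m x y t := by
  unfold similarityFuzzyMetric
  split_ifs
  · exact one_pos
  · exact mul_pos (pos x y) (lt_min ht one_pos)

theorem similarityFuzzyMetric_lt_one (pos : ∀ x y, 0 < m x y)
    (lt_one : ∀ x y, x ≠ y → m x y < 1) {x y : X} (hxy : x ≠ y) (t : ℝ) :
    similarityFuzzyMetric m x y t < 1 := by
  rw [similarityFuzzyMetric_of_ne hxy]
  exact (mul_le_of_le_one_right (pos x y).le (min_le_right t 1)).trans_lt (lt_one x y hxy)

theorem similarityFuzzyMetric_le_one (pos : ∀ x y, 0 < m x y)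
    (lt_one : ∀ x y, x ≠ y → m x y < 1) (x y : X) (t : ℝ) :
    similarityFuzzyMetric m x y t ≤ 1 := by
  by_cases hxy : x = y
  · rw [hxy, similarityFuzzyMetric_self]
  · exact (similarityFuzzyMetric_lt_one pos lt_one hxy t).le

theorem similarityFuzzyMetric_eq_one_iff (pos : ∀ x y, 0 < m x y)
    (lt_one : ∀ x y, x ≠ y → m x y < 1) (x y : X) (t : ℝ) :
    similarityFuzzyMetric m x y t = 1 ↔ x = y := by
  refine ⟨fun h => ?_, fun h => h ▸ similarityFuzzyMetric_self x t⟩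
  by_contra hxy
  exact (similarityFuzzyMetric_lt_one pos lt_one hxy t).ne h

theorem similarityFuzzyMetric_comm (symm : ∀ x y, m x y = m y x) (x y : X) (t : ℝ) :
    similarityFuzzyMetric m x y t = similarityFuzzyMetric m y x t := by
  simp only [similarityFuzzyMetric, eq_comm (a := x), symm x y]

theorem similarityFuzzyMetric_mul_le (pos : ∀ x y, 0 < m x y)
    (lt_one : ∀ x y, x ≠ y → m x y < 1) (mul_le : ∀ x y z, m x y * m y z ≤ m x z)
    (x y z : X) {t s : ℝ} (ht : 0 < t) (hs : 0 < s) :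
    similarityFuzzyMetric m x y t * similarityFuzzyMetric m y z s ≤
      similarityFuzzyMetric m x z (t + s) := by
  have hle : ∀ a b r, r ≤ t + s → m a b * min r 1 ≤ m a b * min (t + s) 1 := fun a b r hr =>
    mul_le_mul_of_nonneg_left (min_le_min_right 1 hr) (pos a b).le
  by_cases hxz : x = z
  · subst hxz
    rw [similarityFuzzyMetric_self]
    exact mul_le_one₀ (similarityFuzzyMetric_le_one pos lt_one x y t)
      (similarityFuzzyMetric_pos pos y x hs).le (similarityFuzzyMetric_le_one pos lt_one y x s)
  rw [similarityFuzzyMetric_of_ne hxz]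
  by_cases hxy : x = y
  · subst hxy
    rw [similarityFuzzyMetric_self, one_mul, similarityFuzzyMetric_of_ne hxz]
    exact hle x z s (le_add_of_nonneg_left ht.le)
  by_cases hyz : y = z
  · subst hyz
    rw [similarityFuzzyMetric_self, mul_one, similarityFuzzyMetric_of_ne hxy]
    exact hle x y t (le_add_of_nonneg_right hs.le)
  rw [similarityFuzzyMetric_of_ne hxy, similarityFuzzyMetric_of_ne hyz, mul_mul_mul_comm]
  exact mul_le_mul (mul_le x y z) (min_one_mul_min_one_le_min_add_one ht.le hs.le)
    (mul_nonneg (le_min ht.le zero_le_one) (le_min hs.le zero_le_one)) (pos x z).le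

theorem continuousOn_similarityFuzzyMetric (x y : X) :
    ContinuousOn (similarityFuzzyMetric m x y) (Set.Ioi 0) := by
  unfold similarityFuzzyMetric
  split_ifs
  · exact continuousOn_const
  · exact (continuous_const.mul (continuous_id.min continuous_const)).continuousOn

noncomputable def ofSimilarity (m : X → X → ℝ) (pos : ∀ x y, 0 < m x y)
    (lt_one : ∀ x y, x ≠ y → m x y < 1) (symm : ∀ x y, m x y = m y x)
    (mul_le : ∀ x y z, m x y * m y z ≤ m x z) : FuzzyMetricSpace X where
  star a b := a * b
  M := similarityFuzzyMetric m
  star_mem _ _ ha hb := ⟨mul_nonneg ha.1 hb.1, mul_le_one₀ ha.2 hb.1 hb.2⟩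
  star_assoc := mul_assoc
  star_comm := mul_comm
  star_cont := (continuous_fst.mul continuous_snd).continuousOn
  star_one a _ := mul_one a
  star_mono _ _ _ _ _ hb hc _ hac hbd := mul_le_mul hac hbd hb.1 hc.1
  M_pos x y _ := similarityFuzzyMetric_pos pos x y
  M_le_one x y t _ := similarityFuzzyMetric_le_one pos lt_one x y t
  M_eq_one_iff x y t _ := similarityFuzzyMetric_eq_one_iff pos lt_one x y t
  M_symm := similarityFuzzyMetric_comm symm
  M_triangle x y z _ _ := similarityFuzzyMetric_mul_le pos lt_one mul_le x y z
  M_cont := continuousOn_similarityFuzzyMetric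

end FuzzyMetricSpace

/-- On `X = (0,1]`, with `φ(t) = min{t,1}`, the map
`M(x,y,t) = 1` if `x = y` and `(min{x,y}/max{x,y})·φ(t)` otherwise, together
with the product t-norm, is a fuzzy metric space. -/
theorem Mphi_fuzzy_metric :
    ∃ F : FuzzyMetricSpace {x : ℝ // x ∈ Set.Ioc (0:ℝ) 1},
      F.star = (fun a b : ℝ => a * b) ∧
      F.M = fun x y t =>
        if x = y then 1 else (min x.1 y.1 / max x.1 y.1) * min t 1 :=
  ⟨.ofSimilarity (fun x y => min x.1 y.1 / max x.1 y.1)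
    (fun x y => min_div_max_pos x.2.1 y.2.1)
    (fun x _ hxy => min_div_max_lt_one x.2.1 (Subtype.coe_injective.ne hxy))
    (fun x y => min_div_max_comm x y)
    (fun x y z => min_div_max_mul_min_div_max_le x.2.1 y.2.1 z.2.1), rfl, rfl⟩
end

section
/- Let (X, M, ∗) be a fuzzy metric space and f : X → X. If f has the F-ergodic shadowing property, then f is F-chain transitive, assuming f is surjective and every δ-F-ergodic pseudo orbit of f can be ε-F-ergodic shadowed. -/
open Filter Topology

/-- A set `S ⊆ ℕ` has density zero. -/
def densityZero (S : Set ℕ) : Prop :=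
  Tendsto (fun n : ℕ => (Nat.card (S ∩ Set.Ico 1 n : Set ℕ) : ℝ) / n)
    atTop (nhds 0)

variable {X : Type*}

/-- `c 0, c 1, …, c n` is a `δ`-F-chain of `f` (of length `n`). -/
def IsFChain (F : FuzzyMetricSpace X) (f : X → X) (δ : ℝ) (n : ℕ) (c : ℕ → X) : Prop :=
  ∃ T₀ > (0:ℝ), ∀ i < n, F.M (f (c i)) (c (i + 1)) T₀ > 1 - δ

/-- `f` is F-chain transitive. -/
def FChainTransitive (F : FuzzyMetricSpace X) (f : X → X) : Prop :=
  ∀ x y : X, ∀ δ > (0:ℝ), ∃ n ≥ 1, ∃ c : ℕ → X,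
    c 0 = x ∧ c n = y ∧ IsFChain F f δ n c

/-- `f` is F-chain mixing. -/
def FChainMixing (F : FuzzyMetricSpace X) (f : X → X) : Prop :=
  ∀ x y : X, ∀ δ > (0:ℝ), ∃ N₀ : ℕ, ∀ n ≥ N₀, ∃ c : ℕ → X,
    c 0 = x ∧ c n = y ∧ IsFChain F f δ n c

/-- `f` has the F-ergodic shadowing property. -/
def FErgodicShadowing (F : FuzzyMetricSpace X) (f : X → X) : Prop :=
  ∀ ε > (0:ℝ), ∃ δ > (0:ℝ), ∀ (μ : ℕ → X) (T₀ : ℝ), 0 < T₀ →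
    densityZero {i | F.M (f (μ i)) (μ (i + 1)) T₀ ≤ 1 - δ} →
    ∃ x : X, densityZero {i | F.M (f^[i] x) (μ i) T₀ ≤ 1 - ε}

/-- `f` has the F-shadowing property (for infinite pseudo-orbits). -/
def FShadowing (F : FuzzyMetricSpace X) (f : X → X) : Prop :=
  ∀ ε > (0:ℝ), ∃ δ > (0:ℝ), ∀ μ : ℕ → X,
    (∃ T > (0:ℝ), ∀ i : ℕ, F.M (f (μ i)) (μ (i + 1)) T > 1 - δ) →
    ∃ x : X, ∃ T₀ > (0:ℝ), ∀ i : ℕ, F.M (f^[i] x) (μ i) T₀ > 1 - ε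

/-- `f` has the F-shadowing property for finite chains. -/
def FShadowingFin (F : FuzzyMetricSpace X) (f : X → X) : Prop :=
  ∀ ε > (0:ℝ), ∃ δ > (0:ℝ), ∀ (n : ℕ) (c : ℕ → X), IsFChain F f δ n c →
    ∃ x : X, ∃ T₀ > (0:ℝ), ∀ i ≤ n, F.M (f^[i] x) (c i) T₀ > 1 - ε

/-- The open ball in a fuzzy metric space. -/
def fuzzyBall (F : FuzzyMetricSpace X) (x : X) (r t : ℝ) : Set X :=
  {y | F.M x y t > 1 - r}

/-- The topology induced by a fuzzy metric. -/
def fuzzyTopology (F : FuzzyMetricSpace X) : TopologicalSpace X :=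
  TopologicalSpace.generateFrom
    {s | ∃ (x : X) (r t : ℝ), 0 < r ∧ r < 1 ∧ 0 < t ∧ s = fuzzyBall F x r t}

/-- `f` is fuzzy continuous. -/
def FuzzyContinuous (F : FuzzyMetricSpace X) (f : X → X) : Prop :=
  ∀ x₀ : X, ∀ ε ∈ Set.Ioo (0:ℝ) 1, ∀ t > (0:ℝ),
    ∃ δ ∈ Set.Ioo (0:ℝ) 1, ∃ t' > (0:ℝ), ∀ x : X,
      F.M x x₀ t' > 1 - δ → F.M (f x) (f x₀) t > 1 - ε

/-- The fuzzy metric space is complete: every Cauchy sequence converges. -/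
def FComplete (F : FuzzyMetricSpace X) : Prop :=
  ∀ u : ℕ → X,
    (∀ ε > (0:ℝ), ∀ t > (0:ℝ), ∃ N : ℕ, ∀ m ≥ N, ∀ n ≥ N, F.M (u m) (u n) t > 1 - ε) →
    ∃ x : X, ∀ t > (0:ℝ), Tendsto (fun n => F.M (u n) x t) atTop (nhds 1)


/-!
Since `f` is surjective, `y` has a backward orbit. Concatenating, on the dyadic blocks
`[2 ^ m, 2 ^ (m + 1))`, alternately the forward orbit of `x` and a backward orbit ending at `y`
gives a sequence that is an exact orbit except at the times `2 ^ k - 1`, a set of density zero.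
A point `z` that `δ`-F-ergodic shadows it is `δ`-close to it outside a set of density zero, so
in particular at some time inside a long `x`-block and at some later time inside the following
`y`-block. Following the sequence from `x`, switching to the orbit of `z`, and switching back
yields a `δ`-F-chain from `x` to `y`.
-/

namespace FuzzyMetricSpace

lemma M_self (F : FuzzyMetricSpace X) (x : X) {t : ℝ} (ht : 0 < t) : F.M x x t = 1 :=
  (F.M_eq_one_iff x x t ht).mpr rfl

end FuzzyMetricSpace

lemma densityZero_of_card_le {S : Set ℕ} {b : ℕ → ℝ}
    (hb : Tendsto (fun n : ℕ => b n / n) atTop (𝓝 0))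
    (hS : ∀ n, (Nat.card (S ∩ Set.Ico 1 n : Set ℕ) : ℝ) ≤ b n) : densityZero S :=
  tendsto_of_tendsto_of_tendsto_of_le_of_le tendsto_const_nhds hb
    (fun _ => by positivity) fun n => div_le_div_of_nonneg_right (hS n) n.cast_nonneg

lemma densityZero.mono {S T : Set ℕ} (hT : densityZero T) (hST : S ⊆ T) : densityZero S :=
  densityZero_of_card_le hT fun n => by
    exact_mod_cast Nat.card_mono ((Set.finite_Ico 1 n).inter_of_right T)
      (Set.inter_subset_inter_left _ hST)

lemma tendsto_natLog_add_one_div_atTop (b : ℕ) :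
    Tendsto (fun n : ℕ => ((Nat.log b n : ℝ) + 1) / n) atTop (𝓝 0) := by
  have hlogb : Tendsto (fun x : ℝ => (Real.logb b x + 1) / x) atTop (𝓝 0) :=
    (Real.isLittleO_logb_id_atTop.add
      (Asymptotics.isLittleO_const_id_atTop 1)).tendsto_div_nhds_zero
  refine tendsto_of_tendsto_of_tendsto_of_le_of_le tendsto_const_nhds
    (hlogb.comp tendsto_natCast_atTop_atTop) (fun _ => by positivity) fun n => ?_
  exact div_le_div_of_nonneg_right (by linarith [Real.natLog_le_logb n b]) n.cast_nonneg

lemma densityZero_setOf_succ_eq_two_pow : densityZero {i | ∃ k, i + 1 = 2 ^ k} := by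
  refine densityZero_of_card_le (tendsto_natLog_add_one_div_atTop 2) fun n => ?_
  have hsub : {i | ∃ k, i + 1 = 2 ^ k} ∩ Set.Ico 1 n ⊆
      ((Finset.range (Nat.log 2 n + 1)).image fun k => 2 ^ k - 1 : Finset ℕ) := by
    rintro i ⟨⟨k, hk⟩, -, hin⟩
    simp only [Finset.coe_image, Finset.coe_range, Set.mem_image, Set.mem_Iio]
    exact ⟨k, Nat.lt_succ_of_le (Nat.le_log_of_pow_le one_lt_two (by omega)), by omega⟩
  have hcard := (Set.ncard_le_ncard hsub (Finset.finite_toSet _)).trans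
    ((Set.ncard_coe_finset _).trans_le Finset.card_image_le)
  rw [Finset.card_range] at hcard
  rw [Nat.card_coe_set_eq]
  exact_mod_cast hcard

lemma densityZero.eventually_exists_not_mem {D : Set ℕ} (hD : densityZero D) :
    ∀ᶠ n in atTop, ∃ i, n < i ∧ i < 2 * n ∧ i ∉ D := by
  have hsmall := (hD.comp (tendsto_atTop_mono (fun n => by omega : ∀ n, n ≤ 2 * n)
    tendsto_id)).eventually_lt_const (show (0:ℝ) < 1 / 4 by norm_num)
  filter_upwards [hsmall, eventually_ge_atTop 2] with n hn hn2
  by_contra! hfull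
  have hsub : Set.Ioo n (2 * n) ⊆ D ∩ Set.Ico 1 (2 * n) :=
    fun i hi => ⟨hfull i hi.1 hi.2, by have := hi.1; omega, hi.2⟩
  have hcard : n ≤ Nat.card (D ∩ Set.Ico 1 (2 * n) : Set ℕ) + 1 := by
    have := Nat.card_mono ((Set.finite_Ico 1 (2 * n)).inter_of_right D) hsub
    rw [Nat.card_coe_set_eq (Set.Ioo _ _), ← Finset.coe_Ioo, Set.ncard_coe_finset,
      Nat.card_Ioo] at this
    omega
  have hcard' : (n : ℝ) ≤ Nat.card (D ∩ Set.Ico 1 (2 * n) : Set ℕ) + 1 := by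
    exact_mod_cast hcard
  have hn2' : (2 : ℝ) ≤ n := by exact_mod_cast hn2
  simp only [Function.comp_apply] at hn
  rw [div_lt_iff₀ (by positivity)] at hn
  push_cast at hn
  linarith

lemma Function.Surjective.exists_backward_orbit {α : Type*} {f : α → α}
    (hf : Function.Surjective f) (y : α) : ∃ g : ℕ → α, g 0 = y ∧ ∀ n, f (g (n + 1)) = g n :=
  ⟨fun n => (Function.surjInv hf)^[n] y, rfl, fun n => by
    show f ((Function.surjInv hf)^[n + 1] y) = _
    rw [Function.iterate_succ_apply']; exact Function.surjInv_eq hf _⟩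

section DyadicBlockOrbit

variable {α : Type*} {f : α → α} {x : α} {g : ℕ → α}

/-- On the dyadic block `[2 ^ m, 2 ^ (m + 1))` this runs along the orbit `x, f x, …` when `m` is
even, and along the backward orbit `…, g 1, g 0` (ending at the last index of the block) when
`m` is odd. -/
def dyadicBlockOrbit (f : α → α) (x : α) (g : ℕ → α) (i : ℕ) : α :=
  if Even (Nat.log 2 i) then f^[i - 2 ^ Nat.log 2 i] x else g (2 ^ (Nat.log 2 i + 1) - 1 - i)

lemma dyadicBlockOrbit_succ (hg : ∀ n, f (g (n + 1)) = g n) {m i : ℕ}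
    (hmi : 2 ^ m ≤ i) (him : i + 1 < 2 ^ (m + 1)) :
    f (dyadicBlockOrbit f x g i) = dyadicBlockOrbit f x g (i + 1) := by
  have hlog : Nat.log 2 i = m := Nat.log_eq_of_pow_le_of_lt_pow hmi (by omega)
  have hlog' : Nat.log 2 (i + 1) = m := Nat.log_eq_of_pow_le_of_lt_pow (by omega) him
  unfold dyadicBlockOrbit
  rw [hlog, hlog']
  split_ifs
  · rw [show i + 1 - 2 ^ m = i - 2 ^ m + 1 by omega, Function.iterate_succ_apply']
  · rw [show 2 ^ (m + 1) - 1 - i = 2 ^ (m + 1) - 1 - (i + 1) + 1 by omega, hg]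

lemma dyadicBlockOrbit_succ_of_ne (hg : ∀ n, f (g (n + 1)) = g n) {i : ℕ}
    (hi : ∀ k, i + 1 ≠ 2 ^ k) :
    f (dyadicBlockOrbit f x g i) = dyadicBlockOrbit f x g (i + 1) := by
  have hi₀ : i ≠ 0 := fun h => hi 0 (by rw [h]; rfl)
  exact dyadicBlockOrbit_succ hg (Nat.pow_log_le_self 2 hi₀)
    (lt_of_le_of_ne (Nat.lt_pow_succ_log_self one_lt_two i) (hi _))

lemma dyadicBlockOrbit_two_pow {m : ℕ} (hm : Even m) : dyadicBlockOrbit f x g (2 ^ m) = x := by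
  simp [dyadicBlockOrbit, Nat.log_pow one_lt_two, hm]

lemma dyadicBlockOrbit_two_pow_succ_sub_one {m : ℕ} (hm : Odd m) :
    dyadicBlockOrbit f x g (2 ^ (m + 1) - 1) = g 0 := by
  have hpow : 2 ^ (m + 1) = 2 * 2 ^ m := pow_succ' 2 m
  have hpos : 1 ≤ 2 ^ m := Nat.one_le_two_pow
  have hlog : Nat.log 2 (2 ^ (m + 1) - 1) = m :=
    Nat.log_eq_of_pow_le_of_lt_pow (by omega) (by omega)
  simp [dyadicBlockOrbit, hlog, Nat.not_even_iff_odd.mpr hm]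

end DyadicBlockOrbit

/-- The chain follows `μ` from `p` to `i - 1`, the orbit of `z` from `i` to `j - 1`, and `μ` again
from `j` to `q`. -/
lemma exists_isFChain_splice_orbit {F : FuzzyMetricSpace X} {f : X → X} {δ T : ℝ}
    (hδ : 0 < δ) (hT : 0 < T) {μ : ℕ → X} {z : X} {p i j q : ℕ}
    (hpi : p < i) (hij : i < j) (hjq : j ≤ q)
    (hμi : ∀ a, p ≤ a → a < i → f (μ a) = μ (a + 1))
    (hμj : ∀ a, j ≤ a → a < q → f (μ a) = μ (a + 1))
    (hi : 1 - δ < F.M (f^[i] z) (μ i) T) (hj : 1 - δ < F.M (f^[j] z) (μ j) T) :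
    ∃ c : ℕ → X, c 0 = μ p ∧ c (q - p) = μ q ∧ IsFChain F f δ (q - p) c := by
  set w : ℕ → X := fun a => if i ≤ a ∧ a < j then f^[a] z else μ a with hw
  have hstep : ∀ a, p ≤ a → a < q → 1 - δ < F.M (f (w a)) (w (a + 1)) T := by
    intro a hpa haq
    simp only [hw]
    split_ifs with ha ha'
    · rw [← Function.iterate_succ_apply' f, F.M_self _ hT]
      linarith
    · rwa [← Function.iterate_succ_apply' f, Nat.succ_eq_add_one, show a + 1 = j by omega]
    · rwa [hμi a hpa (by omega), show a + 1 = i by omega, F.M_symm]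
    · have hexact : f (μ a) = μ (a + 1) := by
        rcases lt_or_ge a i with hai | hja
        · exact hμi a hpa hai
        · exact hμj a (by omega) haq
      rw [hexact, F.M_self _ hT]
      linarith
  refine ⟨fun t => w (p + t), ?_, ?_, T, hT, fun t ht => hstep (p + t) (by omega) (by omega)⟩
  · simp only [hw, add_zero]
    rw [if_neg (by omega)]
  · simp only [hw, Nat.add_sub_cancel' (hpi.trans_le (hij.le.trans hjq)).le]
    rw [if_neg (by omega)]

/-- F-ergodic shadowing implies F-chain transitivity. -/
theorem ergodicShadowing_chainTransitive {X : Type*} (F : FuzzyMetricSpace X)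
    (f : X → X) (hf : Function.Surjective f)
    (h : FErgodicShadowing F f) : FChainTransitive F f := by
  intro x y δ hδ
  obtain ⟨δ', hδ', hshadow⟩ := h δ hδ
  obtain ⟨g, hg0, hg⟩ := hf.exists_backward_orbit y
  set μ := dyadicBlockOrbit f x g
  have hpseudo : densityZero {i | F.M (f (μ i)) (μ (i + 1)) 1 ≤ 1 - δ'} := by
    refine densityZero_setOf_succ_eq_two_pow.mono fun i (hi : F.M _ _ 1 ≤ 1 - δ') => ?_
    refine not_forall_not.mp fun hne => ?_
    rw [dyadicBlockOrbit_succ_of_ne hg hne, F.M_self _ one_pos] at hi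
    linarith
  obtain ⟨z, hz⟩ := hshadow μ 1 one_pos hpseudo
  obtain ⟨m₀, hm₀⟩ := eventually_atTop.1 <|
    (tendsto_pow_atTop_atTop_of_one_lt one_lt_two).eventually hz.eventually_exists_not_mem
  obtain ⟨i, hi₁, hi₂, hi⟩ := hm₀ (2 * m₀) (by omega)
  obtain ⟨j, hj₁, hj₂, hj⟩ := hm₀ (2 * m₀ + 1) (by omega)
  have hpow₁ : 2 ^ (2 * m₀ + 1) = 2 * 2 ^ (2 * m₀) := pow_succ' 2 _
  have hpow₂ : 2 ^ (2 * m₀ + 1 + 1) = 2 * 2 ^ (2 * m₀ + 1) := pow_succ' 2 _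
  obtain ⟨c, hc0, hcq, hc⟩ := exists_isFChain_splice_orbit hδ one_pos (μ := μ) (z := z)
    (p := 2 ^ (2 * m₀)) (q := 2 ^ (2 * m₀ + 1 + 1) - 1) hi₁ (by omega) (by omega)
    (fun a ha ha' => dyadicBlockOrbit_succ hg (m := 2 * m₀) ha (by omega))
    (fun a ha ha' => dyadicBlockOrbit_succ hg (m := 2 * m₀ + 1) (by omega) (by omega))
    (not_le.mp hi) (not_le.mp hj)
  refine ⟨_, by omega, c, hc0.trans (dyadicBlockOrbit_two_pow (even_two_mul m₀)),
    hcq.trans ((dyadicBlockOrbit_two_pow_succ_sub_one (odd_two_mul_add_one m₀)).trans hg0), hc⟩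
end

section
/- Let (X, M, ∗) be a fuzzy metric space and f : X → X. If f has the F-ergodic shadowing property, then for every natural number k ≥ 1 the map f^k also has the F-ergodic shadowing property. -/
open Filter Topology

variable {X : Type*}

/-! A pseudo-orbit `μ` of `f^[k]` is turned into a pseudo-orbit `ν = fillIterates f k μ` of `f`
by inserting the `f`-iterates of `μ q` between `μ q` and `μ (q + 1)`. The only jumps of `ν` sit
at the indices `k * q + (k - 1)` where `μ` jumps, so the bad set of `ν` is a thinned-out copy of
that of `μ` and still has density zero. A point `x` that ergodically shadows `ν` under `f`
ergodically shadows `μ` under `f^[k]`, because `f^[k * q] x = (f^[k])^[q] x` and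
`ν (k * q) = μ q`, and restricting a density-zero set to the multiples of `k` and dividing by `k`
keeps density zero. -/

namespace densityZero

lemma of_ncard_le_add {S T : Set ℕ} (hT : densityZero T) (C : ℕ)
    (hST : ∀ n, (S ∩ Set.Ico 1 n).ncard ≤ (T ∩ Set.Ico 1 n).ncard + C) : densityZero S := by
  have hbound : Tendsto (fun n : ℕ => (Nat.card (T ∩ Set.Ico 1 n : Set ℕ) : ℝ) / n + C / n)
      atTop (𝓝 0) := by
    simpa using hT.add (tendsto_const_div_atTop_nhds_zero_nat (C : ℝ))
  refine squeeze_zero (fun n => by positivity) (fun n => ?_) hbound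
  rw [← add_div, Nat.card_coe_set_eq, Nat.card_coe_set_eq]
  gcongr
  exact_mod_cast hST n

lemma mono_s8 {S T : Set ℕ} (hT : densityZero T) (hST : S ⊆ T) : densityZero S :=
  hT.of_ncard_le_add 0 fun n =>
    Set.ncard_le_ncard (Set.inter_subset_inter_left _ hST) ((Set.finite_Ico 1 n).inter_of_right T)

lemma image_of_le {D : Set ℕ} (hD : densityZero D) {g : ℕ → ℕ} (hg : ∀ q, q ≤ g q) :
    densityZero (g '' D) := by
  refine hD.of_ncard_le_add 1 fun n => ?_
  have hsub : g '' D ∩ Set.Ico 1 n ⊆ g '' insert 0 (D ∩ Set.Ico 1 n) := by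
    rintro _ ⟨⟨q, hq, rfl⟩, -, hqn⟩
    refine ⟨q, ?_, rfl⟩
    rcases Nat.eq_zero_or_pos q with rfl | hq0
    · exact Set.mem_insert _ _
    · exact Set.mem_insert_of_mem _ ⟨hq, hq0, (hg q).trans_lt hqn⟩
  have hfin : (insert 0 (D ∩ Set.Ico 1 n)).Finite :=
    ((Set.finite_Ico 1 n).inter_of_right D).insert 0
  calc (g '' D ∩ Set.Ico 1 n).ncard
      ≤ (g '' insert 0 (D ∩ Set.Ico 1 n)).ncard := Set.ncard_le_ncard hsub (hfin.image g)
    _ ≤ (insert 0 (D ∩ Set.Ico 1 n)).ncard := Set.ncard_image_le hfin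
    _ ≤ (D ∩ Set.Ico 1 n).ncard + 1 := Set.ncard_insert_le _ _

lemma preimage_mul_left {B : Set ℕ} (hB : densityZero B) {k : ℕ} (hk : 0 < k) :
    densityZero ((k * ·) ⁻¹' B) := by
  have hcard : ∀ n,
      (((k * ·) ⁻¹' B ∩ Set.Ico 1 n).ncard : ℝ) ≤ (B ∩ Set.Ico 1 (k * n)).ncard := by
    intro n
    have hsub : (k * ·) '' ((k * ·) ⁻¹' B ∩ Set.Ico 1 n) ⊆ B ∩ Set.Ico 1 (k * n) := by
      rintro _ ⟨q, ⟨hq, hq1, hqn⟩, rfl⟩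
      exact ⟨hq, Nat.one_le_iff_ne_zero.mpr (by positivity), Nat.mul_lt_mul_of_pos_left hqn hk⟩
    have := Set.ncard_le_ncard hsub ((Set.finite_Ico 1 (k * n)).inter_of_right B)
    rw [Set.ncard_image_of_injective _ (fun a b hab => Nat.eq_of_mul_eq_mul_left hk hab)] at this
    exact_mod_cast this
  have hkn : Tendsto (k * ·) atTop atTop :=
    tendsto_atTop_mono (fun n => Nat.le_mul_of_pos_left n hk) tendsto_id
  have hbound : Tendsto (fun n : ℕ =>
      (k : ℝ) * ((Nat.card (B ∩ Set.Ico 1 (k * n) : Set ℕ) : ℝ) / ((k * n : ℕ) : ℝ)))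
      atTop (𝓝 0) := by
    simpa using (hB.comp hkn).const_mul (k : ℝ)
  refine squeeze_zero (fun n => by positivity) (fun n => ?_) hbound
  rw [Nat.card_coe_set_eq, Nat.card_coe_set_eq, Nat.cast_mul, ← mul_div_assoc,
    mul_div_mul_left _ _ (by positivity : (k : ℝ) ≠ 0)]
  exact div_le_div_of_nonneg_right (hcard n) n.cast_nonneg

end densityZero

lemma FuzzyMetricSpace.M_self_s8 (F : FuzzyMetricSpace X) (x : X) {t : ℝ} (ht : 0 < t) :
    F.M x x t = 1 :=
  (F.M_eq_one_iff x x t ht).mpr rfl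

def fillIterates (f : X → X) (k : ℕ) (μ : ℕ → X) (i : ℕ) : X :=
  f^[i % k] (μ (i / k))

lemma fillIterates_mul_add (f : X → X) (μ : ℕ → X) {k r : ℕ} (hr : r < k) (q : ℕ) :
    fillIterates f k μ (k * q + r) = f^[r] (μ q) := by
  rw [fillIterates, Nat.mul_add_mod, Nat.mod_eq_of_lt hr, Nat.mul_add_div (by omega),
    Nat.div_eq_of_lt hr, add_zero]

lemma fillIterates_jumps_subset (F : FuzzyMetricSpace X) (f : X → X) (μ : ℕ → X) {k : ℕ}
    (hk : 0 < k) {T δ : ℝ} (hT : 0 < T) (hδ : 0 < δ) :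
    {i | F.M (f (fillIterates f k μ i)) (fillIterates f k μ (i + 1)) T ≤ 1 - δ} ⊆
      (fun q => k * q + (k - 1)) '' {q | F.M (f^[k] (μ q)) (μ (q + 1)) T ≤ 1 - δ} := by
  intro i hi
  obtain ⟨q, r, hr, rfl⟩ : ∃ q r, r < k ∧ k * q + r = i :=
    ⟨i / k, i % k, Nat.mod_lt i hk, Nat.div_add_mod i k⟩
  simp only [Set.mem_ofPred_eq, fillIterates_mul_add f μ hr] at hi
  rcases Nat.lt_or_ge (r + 1) k with hr1 | hr1
  · rw [add_assoc, fillIterates_mul_add f μ hr1, Function.iterate_succ_apply',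
      F.M_self_s8 _ hT] at hi
    linarith
  · obtain rfl : r = k - 1 := by omega
    refine ⟨q, ?_, rfl⟩
    have hnext : k * q + (k - 1) + 1 = k * (q + 1) + 0 := by rw [Nat.mul_succ]; omega
    rwa [hnext, fillIterates_mul_add f μ hk, Function.iterate_zero_apply,
      ← Function.iterate_succ_apply' f, Nat.succ_eq_add_one, Nat.sub_add_cancel hk] at hi

/-- If `f` has the F-ergodic shadowing property, so does `f^k` for `k ≥ 1`. -/
theorem ergodicShadowing_iterate {X : Type*} (F : FuzzyMetricSpace X)
    (f : X → X) (k : ℕ) (hk : 1 ≤ k)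
    (h : FErgodicShadowing F f) : FErgodicShadowing F (f^[k]) := by
  intro ε hε
  obtain ⟨δ, hδ, hshadow⟩ := h ε hε
  refine ⟨δ, hδ, fun μ T₀ hT₀ hμ => ?_⟩
  obtain ⟨x, hx⟩ := hshadow (fillIterates f k μ) T₀ hT₀
    ((hμ.image_of_le fun q => by nlinarith).mono_s8 (fillIterates_jumps_subset F f μ hk hT₀ hδ))
  refine ⟨x, (hx.preimage_mul_left hk).mono_s8 fun q hq => ?_⟩
  have hν : fillIterates f k μ (k * q) = μ q := fillIterates_mul_add f μ hk q
  simpa only [Set.mem_preimage, Set.mem_ofPred_eq, Function.iterate_mul, hν] using hq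
end

section
/- Let X = (0,1] and f : X → X be defined by f(x) = (3/4)x + 1/8 on (0, 1/2], f(x) = (3/2)x − 1/4 on [1/2, 3/4], f(x) = (1/2)x + 1/2 on [3/4, 1]. Then for all x, y ∈ X with x ≠ y, min{f(x), f(y)}/max{f(x), f(y)} > (1/10) · min{x, y}/max{x, y}. -/
/-! Every branch maps `(0,1]` into `(1/8,1]`, so the ratio `min/max` of two values of `f` exceeds
`1/8`, while `min/max ≤ 1` on the right-hand side. -/

section MinDivMax

variable {α : Type*} [Field α] [LinearOrder α] [IsStrictOrderedRing α]

theorem min_div_max_le_one {a b : α} (hb : 0 ≤ b) : min a b / max a b ≤ 1 :=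
  div_le_one_of_le₀ min_le_max (hb.trans (le_max_right a b))

theorem lt_min_div_max {a b c : α} (hc : 0 ≤ c) (ha : c < a) (hb : c < b) (ha₁ : a ≤ 1)
    (hb₁ : b ≤ 1) : c < min a b / max a b := by
  have hmin : c < min a b := lt_min ha hb
  calc c < min a b := hmin
    _ ≤ min a b / max a b :=
      le_div_self (hc.trans hmin.le) ((hc.trans_lt ha).trans_le (le_max_left a b))
        (max_le ha₁ hb₁)

end MinDivMax

theorem one_eighth_lt_of_piecewise
    (f : {a : ℝ // a ∈ Set.Ioc (0:ℝ) 1} → {a : ℝ // a ∈ Set.Ioc (0:ℝ) 1})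
    (h1 : ∀ x, x.1 ≤ 1 / 2 → (f x).1 = 3 / 4 * x.1 + 1 / 8)
    (h2 : ∀ x, 1 / 2 ≤ x.1 → x.1 ≤ 3 / 4 → (f x).1 = 3 / 2 * x.1 - 1 / 4)
    (h3 : ∀ x, 3 / 4 ≤ x.1 → (f x).1 = 1 / 2 * x.1 + 1 / 2)
    (x : {a : ℝ // a ∈ Set.Ioc (0:ℝ) 1}) : 1 / 8 < (f x).1 := by
  rcases le_or_gt x.1 (1 / 2) with hx | hx
  · rw [h1 x hx]; linarith [x.2.1]
  rcases le_or_gt x.1 (3 / 4) with hx' | hx'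
  · rw [h2 x hx.le hx']; linarith
  · rw [h3 x hx'.le]; linarith

/-- For the piecewise linear map `f` on `(0,1]` with branches
`(3/4)x + 1/8`, `(3/2)x - 1/4`, `(1/2)x + 1/2`, one has
`min{f(x),f(y)}/max{f(x),f(y)} > (1/10)·min{x,y}/max{x,y}` for `x ≠ y`. -/
theorem piecewise_ratio_estimate
    (f : {a : ℝ // a ∈ Set.Ioc (0:ℝ) 1} → {a : ℝ // a ∈ Set.Ioc (0:ℝ) 1})
    (h1 : ∀ x, x.1 ≤ 1 / 2 → (f x).1 = 3 / 4 * x.1 + 1 / 8)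
    (h2 : ∀ x, 1 / 2 ≤ x.1 → x.1 ≤ 3 / 4 → (f x).1 = 3 / 2 * x.1 - 1 / 4)
    (h3 : ∀ x, 3 / 4 ≤ x.1 → (f x).1 = 1 / 2 * x.1 + 1 / 2) :
    ∀ x y : {a : ℝ // a ∈ Set.Ioc (0:ℝ) 1}, x ≠ y →
      min (f x).1 (f y).1 / max (f x).1 (f y).1 >
        1 / 10 * (min x.1 y.1 / max x.1 y.1) := by
  intro x y _
  have hf : 1 / 8 < min (f x).1 (f y).1 / max (f x).1 (f y).1 :=
    lt_min_div_max (by norm_num) (one_eighth_lt_of_piecewise f h1 h2 h3 x)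
      (one_eighth_lt_of_piecewise f h1 h2 h3 y) (f x).2.2 (f y).2.2
  have hxy : min x.1 y.1 / max x.1 y.1 ≤ 1 := min_div_max_le_one y.2.1.le
  linarith
end

section
/- Let X = (0,1] with fuzzy metric M₁(x,y,t) = 1 if x = y and M₁(x,y,t) = min{x,y}/max{x,y} otherwise, and let f be the piecewise linear map f(x) = (3/4)x + 1/8 on (0,1/2], (3/2)x − 1/4 on [1/2,3/4], (1/2)x + 1/2 on [3/4,1]. Then the fuzzy dynamical system (X, M₁, ·, f) does not have the F-shadowing property. -/
/-- The fuzzy metric on `(0,1]` given by `M₁(x,y,t) = 1` if `x = y` and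
`min{x,y}/max{x,y}` otherwise. -/
noncomputable def M1 (x y : {a : ℝ // a ∈ Set.Ioc (0:ℝ) 1}) (_t : ℝ) : ℝ :=
  if x = y then 1 else min x.1 y.1 / max x.1 y.1

/-!
Below `1/2` the map is the contraction `x ↦ 1/2 - 3/4 (1/2 - x)` towards the fixed point `1/2`,
and on `[1/2, 3/4]` it is the expansion `x ↦ 1/2 + 3/2 (x - 1/2)`. So true orbits never cross
`1/2`, while a pseudo-orbit may follow the orbit of `2/5` until it is close to `1/2`, jump
across to its mirror image, and then escape above `3/4`. A true orbit tracing it within `1/5` at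
time `0` starts below `1/2`, so it stays there, and its `M₁`-distance to a point above `3/4` is at
most `2/3 < 4/5`.
-/

local notation "𝕀" => {a : ℝ // a ∈ Set.Ioc (0:ℝ) 1}

section FuzzyMetric

variable (x y : 𝕀) (t : ℝ)

theorem M1_self : M1 x x t = 1 := if_pos rfl

theorem M1_comm : M1 x y t = M1 y x t := by
  simp only [M1, eq_comm, min_comm, max_comm]

theorem M1_eq_div_of_le {x y : 𝕀} (hxy : x.1 ≤ y.1) : M1 x y t = x.1 / y.1 := by
  unfold M1
  split_ifs with h
  · subst h
    exact (div_self x.2.1.ne').symm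
  · rw [min_eq_left hxy, max_eq_right hxy]

theorem M1_mul_right_le : M1 x y t * y.1 ≤ x.1 := by
  rcases le_total x.1 y.1 with hxy | hyx
  · rw [M1_eq_div_of_le t hxy, div_mul_cancel₀ _ y.2.1.ne']
  · rw [M1_comm, M1_eq_div_of_le t hyx]
    calc y.1 / x.1 * y.1 ≤ 1 * y.1 :=
          mul_le_mul_of_nonneg_right (div_le_one_of_le₀ hyx x.2.1.le) y.2.1.le
      _ ≤ x.1 := by rwa [one_mul]

theorem M1_mul_left_le : M1 x y t * x.1 ≤ y.1 :=
  M1_comm x y t ▸ M1_mul_right_le y x t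

theorem one_sub_lt_M1 {x y : 𝕀} {δ : ℝ} (hxy : x.1 ≤ y.1) (h : y.1 - x.1 < δ * y.1) :
    1 - δ < M1 x y t := by
  rw [M1_eq_div_of_le t hxy, lt_div_iff₀ y.2.1]
  linarith

end FuzzyMetric

section Splice

variable {α : Type*} (f : α → α) (c b : α) (K : ℕ)

def spliceOrbit (i : ℕ) : α := if i < K then f^[i] c else f^[i - K] b

theorem spliceOrbit_of_lt {i : ℕ} (hi : i < K) : spliceOrbit f c b K i = f^[i] c := if_pos hi

theorem spliceOrbit_of_le {i : ℕ} (hi : K ≤ i) : spliceOrbit f c b K i = f^[i - K] b :=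
  if_neg (Nat.not_lt.mpr hi)

end Splice

theorem lt_M1_spliceOrbit (f : 𝕀 → 𝕀) {c b : 𝕀} {K : ℕ} {r t : ℝ} (hr : r < 1)
    (hjump : r < M1 (f^[K] c) b t) (i : ℕ) :
    r < M1 (f (spliceOrbit f c b K i)) (spliceOrbit f c b K (i + 1)) t := by
  rcases lt_trichotomy (i + 1) K with hiK | rfl | hKi
  · rw [spliceOrbit_of_lt f c b K (by omega), spliceOrbit_of_lt f c b K hiK,
      ← Function.iterate_succ_apply' f, M1_self]
    exact hr
  · rwa [spliceOrbit_of_lt f c b _ (by omega), spliceOrbit_of_le f c b _ le_rfl, Nat.sub_self,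
      ← Function.iterate_succ_apply' f]
  · rw [spliceOrbit_of_le f c b K (by omega), spliceOrbit_of_le f c b K (by omega),
      show i + 1 - K = i - K + 1 by omega, Function.iterate_succ_apply', M1_self]
    exact hr

section PiecewiseMap

variable {f : 𝕀 → 𝕀}

theorem half_sub_iterate (h1 : ∀ x, x.1 ≤ 1 / 2 → (f x).1 = 3 / 4 * x.1 + 1 / 8)
    {x : 𝕀} (hx : x.1 ≤ 1 / 2) (n : ℕ) :
    1 / 2 - (f^[n] x).1 = (3 / 4) ^ n * (1 / 2 - x.1) := by
  induction n with
  | zero => simp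
  | succ n ih =>
    have hle : (f^[n] x).1 ≤ 1 / 2 := by
      have : 0 ≤ (3 / 4 : ℝ) ^ n * (1 / 2 - x.1) := by positivity
      linarith
    rw [Function.iterate_succ_apply', h1 _ hle, pow_succ]
    linear_combination 3 / 4 * ih

theorem iterate_le_half (h1 : ∀ x, x.1 ≤ 1 / 2 → (f x).1 = 3 / 4 * x.1 + 1 / 8)
    {x : 𝕀} (hx : x.1 ≤ 1 / 2) (n : ℕ) : (f^[n] x).1 ≤ 1 / 2 := by
  have : 0 ≤ (3 / 4 : ℝ) ^ n * (1 / 2 - x.1) := by positivity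
  linarith [half_sub_iterate h1 hx n]

theorem iterate_sub_half
    (h2 : ∀ x, 1 / 2 ≤ x.1 → x.1 ≤ 3 / 4 → (f x).1 = 3 / 2 * x.1 - 1 / 4)
    {x : 𝕀} (hx : 1 / 2 ≤ x.1) {n : ℕ} (hbelow : ∀ m < n, (f^[m] x).1 ≤ 3 / 4) :
    (f^[n] x).1 - 1 / 2 = (3 / 2) ^ n * (x.1 - 1 / 2) := by
  induction n with
  | zero => simp
  | succ n ih =>
    have ih := ih fun m hm => hbelow m (by omega)
    have hge : 1 / 2 ≤ (f^[n] x).1 := by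
      have : 0 ≤ (3 / 2 : ℝ) ^ n * (x.1 - 1 / 2) :=
        mul_nonneg (by positivity) (sub_nonneg.mpr hx)
      linarith
    rw [Function.iterate_succ_apply', h2 _ hge (hbelow n n.lt_succ_self), pow_succ]
    linear_combination 3 / 2 * ih

theorem exists_three_quarters_le_iterate
    (h2 : ∀ x, 1 / 2 ≤ x.1 → x.1 ≤ 3 / 4 → (f x).1 = 3 / 2 * x.1 - 1 / 4)
    {x : 𝕀} (hx : 1 / 2 < x.1) : ∃ n, 3 / 4 ≤ (f^[n] x).1 := by
  by_contra! hall
  obtain ⟨n, hn⟩ :=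
    pow_unbounded_of_one_lt (1 / (4 * (x.1 - 1 / 2))) (by norm_num : (1 : ℝ) < 3 / 2)
  have hgrowth := iterate_sub_half h2 hx.le (n := n) fun m _ => (hall m).le
  have := (div_lt_iff₀ (by linarith : 0 < 4 * (x.1 - 1 / 2))).mp hn
  linarith [hall n]

end PiecewiseMap

theorem piecewise_not_FShadowing_general
    (f : {a : ℝ // a ∈ Set.Ioc (0:ℝ) 1} → {a : ℝ // a ∈ Set.Ioc (0:ℝ) 1})
    (h1 : ∀ x, x.1 ≤ 1 / 2 → (f x).1 = 3 / 4 * x.1 + 1 / 8)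
    (h2 : ∀ x, 1 / 2 ≤ x.1 → x.1 ≤ 3 / 4 → (f x).1 = 3 / 2 * x.1 - 1 / 4) :
    ¬ (∀ ε > (0:ℝ), ∃ δ > (0:ℝ), ∀ μ : ℕ → {a : ℝ // a ∈ Set.Ioc (0:ℝ) 1},
        (∃ T > (0:ℝ), ∀ i : ℕ, M1 (f (μ i)) (μ (i + 1)) T > 1 - δ) →
        ∃ x, ∃ T₀ > (0:ℝ), ∀ i : ℕ, M1 (f^[i] x) (μ i) T₀ > 1 - ε) := by
  intro H
  obtain ⟨δ, hδ, H⟩ := H (1 / 5) (by norm_num)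
  let c : 𝕀 := ⟨2 / 5, by norm_num⟩
  obtain ⟨N, hN⟩ :=
    exists_pow_lt_of_lt_one (by linarith : 0 < 5 * δ / 2) (by norm_num : (3 / 4 : ℝ) < 1)
  set K := N + 1
  set y := f^[K] c
  have hy : 1 / 2 - y.1 = (3 / 4) ^ K * (1 / 10) := by norm_num [y, half_sub_iterate h1 (x := c)]
  have hK_lt : (3 / 4 : ℝ) ^ K < 5 * δ / 2 :=
    (pow_le_pow_of_le_one (by norm_num) (by norm_num) N.le_succ).trans_lt hN
  have hK_pos : 0 < (3 / 4 : ℝ) ^ K := by positivity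
  let b : 𝕀 := ⟨1 - y.1, by constructor <;> linarith [y.2.1]⟩
  have hjump : 1 - δ < M1 y b 1 :=
    one_sub_lt_M1 1 (show y.1 ≤ 1 - y.1 by linarith)
      (show 1 - y.1 - y.1 < δ * (1 - y.1) by nlinarith [y.2.1])
  obtain ⟨x, T₀, -, hx⟩ :=
    H (spliceOrbit f c b K) ⟨1, one_pos, lt_M1_spliceOrbit f (by linarith) hjump⟩
  have hx_le : x.1 ≤ 1 / 2 := by
    have h0 := hx 0
    simp only [spliceOrbit_of_lt f c b K N.succ_pos, Function.iterate_zero_apply] at h0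
    have hxc : M1 x c T₀ * x.1 ≤ 2 / 5 := M1_mul_left_le x c T₀
    linarith [mul_lt_mul_of_pos_right h0 x.2.1]
  obtain ⟨k, hk⟩ := exists_three_quarters_le_iterate h2 (x := b)
    (show 1 / 2 < 1 - y.1 by linarith)
  have hfar := hx (K + k)
  rw [spliceOrbit_of_le f c b K (by omega), Nat.add_sub_cancel_left] at hfar
  nlinarith [M1_mul_right_le (f^[K + k] x) (f^[k] b) T₀, iterate_le_half h1 hx_le (K + k)]

/-- The piecewise linear map `f` does not have the F-shadowing property with
respect to `M₁`. -/
theorem piecewise_not_FShadowing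
    (f : {a : ℝ // a ∈ Set.Ioc (0:ℝ) 1} → {a : ℝ // a ∈ Set.Ioc (0:ℝ) 1})
    (h1 : ∀ x, x.1 ≤ 1 / 2 → (f x).1 = 3 / 4 * x.1 + 1 / 8)
    (h2 : ∀ x, 1 / 2 ≤ x.1 → x.1 ≤ 3 / 4 → (f x).1 = 3 / 2 * x.1 - 1 / 4)
    (h3 : ∀ x, 3 / 4 ≤ x.1 → (f x).1 = 1 / 2 * x.1 + 1 / 2) :
    ¬ (∀ ε > (0:ℝ), ∃ δ > (0:ℝ), ∀ μ : ℕ → {a : ℝ // a ∈ Set.Ioc (0:ℝ) 1},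
        (∃ T > (0:ℝ), ∀ i : ℕ, M1 (f (μ i)) (μ (i + 1)) T > 1 - δ) →
        ∃ x, ∃ T₀ > (0:ℝ), ∀ i : ℕ, M1 (f^[i] x) (μ i) T₀ > 1 - ε) :=
  piecewise_not_FShadowing_general f h1 h2
end
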